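/- arXiv:math/9912155 — 6 statements merged into one kernel-verified Lean document; each statement's English description precedes it below -/
import Mathlib

section
/- Let n ≥ 1 and let Λ = ℤ[1/n]. For any integer l with 1 ≤ l < n, the element 1 − t^l is a unit in the quotient ring Λ[t]/(Φ_n(t)), where Φ_n is the n-th cyclotomic polynomial. -/
/-!
If `ζ` is a root of `Φ_n` in any commutative ring, then `∏_{k=1}^{n-1} (1 - ζ^k) = n`: over `ℤ` this
is the divisibility `Φ_n ∣ ∏_{k=1}^{n-1} (1 - X^k) - n`, which can be checked at a primitive
`n`-th root of unity in `ℂ`. So once `n` is invertible, every factor `1 - ζ^l` divides a unit.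
-/

open Polynomial Finset

theorem cyclotomic_dvd_prod_one_sub_X_pow_sub_natCast {n : ℕ} (hn : 0 < n) :
    cyclotomic n ℤ ∣ ∏ k ∈ range (n - 1), (1 - X ^ (k + 1)) - (n : ℤ[X]) := by
  have hζ : IsPrimitiveRoot (Complex.exp (2 * Real.pi * Complex.I / n)) n :=
    Complex.isPrimitiveRoot_exp n hn.ne'
  rw [← map_dvd_map (Int.castRingHom ℚ) Int.cast_injective (cyclotomic.monic n ℤ),
    map_cyclotomic, cyclotomic_eq_minpoly_rat hζ hn]
  apply minpoly.dvd
  obtain ⟨m, rfl⟩ : ∃ m, n = m + 1 := ⟨n - 1, (Nat.succ_pred_eq_of_pos hn).symm⟩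
  simp only [Polynomial.map_sub, Polynomial.map_prod, Polynomial.map_one, Polynomial.map_pow,
    Polynomial.map_X, Polynomial.map_natCast, map_sub, map_natCast, map_prod, map_pow, map_one,
    aeval_X, Nat.add_sub_cancel, sub_eq_zero]
  exact_mod_cast hζ.prod_one_sub_pow_eq_order

theorem prod_one_sub_pow_eq_natCast_of_isRoot_cyclotomic {S : Type*} [CommRing S] {n : ℕ}
    (hn : 0 < n) {ζ : S} (hζ : (cyclotomic n S).IsRoot ζ) :
    ∏ k ∈ range (n - 1), (1 - ζ ^ (k + 1)) = n := by
  obtain ⟨q, hq⟩ := cyclotomic_dvd_prod_one_sub_X_pow_sub_natCast hn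
  have hΦ : aeval ζ (cyclotomic n ℤ) = 0 := by
    rw [aeval_def, eval₂_eq_eval_map, map_cyclotomic]
    exact hζ
  simpa [hΦ, sub_eq_zero] using congrArg (aeval ζ) hq

theorem isUnit_one_sub_pow_of_isRoot_cyclotomic {S : Type*} [CommRing S] {n l : ℕ}
    (hn : IsUnit (n : S)) (hl1 : 1 ≤ l) (hln : l < n) {ζ : S} (hζ : (cyclotomic n S).IsRoot ζ) :
    IsUnit (1 - ζ ^ l) := by
  rw [← prod_one_sub_pow_eq_natCast_of_isRoot_cyclotomic (by omega) hζ] at hn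
  refine isUnit_of_dvd_unit ?_ hn
  obtain ⟨k, rfl⟩ : ∃ k, l = k + 1 := ⟨l - 1, by omega⟩
  exact dvd_prod_of_mem (fun k => 1 - ζ ^ (k + 1)) (mem_range.mpr (by omega))

theorem AdjoinRoot.isUnit_one_sub_root_pow_cyclotomic {R : Type*} [CommRing R] {n l : ℕ}
    (hn : IsUnit (n : R)) (hl1 : 1 ≤ l) (hln : l < n) :
    IsUnit (1 - root (cyclotomic n R) ^ l) := by
  refine isUnit_one_sub_pow_of_isRoot_cyclotomic (by simpa using hn.map (of _)) hl1 hln ?_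
  simpa [map_cyclotomic] using isRoot_root (cyclotomic n R)

theorem stmt1_general (n : ℕ) (l : ℕ) (hl1 : 1 ≤ l) (hln : l < n) :
    IsUnit (1 - (Ideal.Quotient.mk
        (Ideal.span {@Polynomial.cyclotomic n (Localization.Away (n : ℤ)) CommRing.toRing})
        Polynomial.X) ^ l) := by
  refine AdjoinRoot.isUnit_one_sub_root_pow_cyclotomic ?_ hl1 hln
  simpa using IsLocalization.Away.algebraMap_isUnit (S := Localization.Away (n : ℤ)) (n : ℤ)

/-- In `ℤ[1/n][t]/(Φ_n(t))`, the element `1 - t^l` is a unit for `1 ≤ l < n`. -/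
theorem stmt1 (n : ℕ) (hn : 0 < n) (l : ℕ) (hl1 : 1 ≤ l) (hln : l < n) :
    IsUnit (1 - (Ideal.Quotient.mk
        (Ideal.span {@Polynomial.cyclotomic n (Localization.Away (n : ℤ)) CommRing.toRing})
        Polynomial.X) ^ l) :=
  stmt1_general n l hl1 hln
end

section
/- Let n ≥ 1 and Λ a commutative ring in which n is invertible. Then the canonical map Λ[t]/(t^n − 1) → ∏_{d | n} Λ[t]/(Φ_d(t)) induced by the factorization t^n − 1 = ∏_{d|n} Φ_d(t) is a ring isomorphism. -/
/-! Since `n` is a unit, `X ^ n - 1` is separable, so any two of its distinct factors `Φ_d`,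
`Φ_e` (`d, e ∣ n`) are coprime. The map is then the Chinese remainder isomorphism for the pairwise
coprime ideals `(Φ_d)`, whose intersection is `(∏_{d ∣ n} Φ_d) = (X ^ n - 1)`. -/

namespace Polynomial

variable {R : Type*} [CommRing R] {n : ℕ}

theorem separable_X_pow_sub_one (h : IsUnit (n : R)) : (X ^ n - 1 : R[X]).Separable := by
  simpa using separable_X_pow_sub_C_unit (1 : Rˣ) h

theorem cyclotomic_mul_cyclotomic_dvd_X_pow_sub_one (hn : 0 < n) {d e : ℕ}
    (hd : d ∈ n.divisors) (he : e ∈ n.divisors) (hde : d ≠ e) :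
    cyclotomic d R * cyclotomic e R ∣ X ^ n - 1 := by
  classical
  rw [← prod_cyclotomic_eq_X_pow_sub_one hn, ← Finset.prod_pair (f := (cyclotomic · R)) hde]
  exact Finset.prod_dvd_prod_of_subset _ _ _
    (Finset.insert_subset hd (Finset.singleton_subset_iff.mpr he))

theorem isCoprime_cyclotomic_of_isUnit (hn : 0 < n) (h : IsUnit (n : R)) {d e : ℕ}
    (hd : d ∈ n.divisors) (he : e ∈ n.divisors) (hde : d ≠ e) :
    IsCoprime (cyclotomic d R) (cyclotomic e R) :=
  ((separable_X_pow_sub_one h).of_dvd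
    (cyclotomic_mul_cyclotomic_dvd_X_pow_sub_one hn hd he hde)).isCoprime

end Polynomial

/-- If `n` is invertible in `Λ`, the canonical map
`Λ[t]/(t^n − 1) → ∏_{d ∣ n} Λ[t]/(Φ_d(t))` is a ring isomorphism. -/
theorem stmt2 (Λ : Type*) [CommRing Λ] (n : ℕ) (hn : 0 < n) (h : IsUnit (n : Λ)) :
    Function.Bijective
      (Pi.ringHom (fun d : n.divisors =>
        Ideal.Quotient.factor (S := Ideal.span {Polynomial.X ^ n - 1})
          (T := Ideal.span {Polynomial.cyclotomic (d : ℕ) Λ})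
          (Ideal.span_singleton_le_span_singleton.mpr
            ((Polynomial.prod_cyclotomic_eq_X_pow_sub_one hn Λ) ▸
              Finset.dvd_prod_of_mem (fun i => Polynomial.cyclotomic i Λ) d.2)))) := by
  have hcop (d e : n.divisors) (hde : d ≠ e) :
      IsCoprime (Polynomial.cyclotomic d Λ) (Polynomial.cyclotomic e Λ) :=
    Polynomial.isCoprime_cyclotomic_of_isUnit hn h d.2 e.2 (Subtype.coe_ne_coe.mpr hde)
  have hinf : ⨅ d : n.divisors, Ideal.span {Polynomial.cyclotomic d Λ} =
      Ideal.span {Polynomial.X ^ n - 1} := by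
    rw [Ideal.iInf_span_singleton hcop,
      Finset.prod_coe_sort n.divisors (Polynomial.cyclotomic · Λ),
      Polynomial.prod_cyclotomic_eq_X_pow_sub_one hn]
  let crt := Ideal.quotientInfRingEquivPiQuotient _ fun d e hde =>
    (Ideal.isCoprime_span_singleton_iff _ _).mpr (hcop d e hde)
  convert crt.bijective.comp (Ideal.quotEquivOfEq hinf.symm).bijective
  ext x d
  obtain ⟨p, rfl⟩ := Ideal.Quotient.mk_surjective x
  rfl
end

section
/- Let A be a finite abelian group and p a prime not dividing |A|. Then the natural ring homomorphism 𝔽_p[A] → ∏_C 𝔽_p[C], given by the projections to group algebras of all cyclic quotient groups C of A, is injective (hence an isomorphism, since both sides have the same 𝔽_p-dimension |A| = Σ_C φ(|C|)). -/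
/-!
Pass to an algebraic closure `K` of the coefficient field; since `|A|` is invertible there, `K`
has enough roots of unity for `A` and `A` has exactly `|A|` characters `χ : A → Kˣ`. Each of them
factors through `A ⧸ ker χ`, which is cyclic, so an element killed by all the cyclic
projections is killed by every character. The characters are linearly independent (Dedekind),
hence a basis of `A → K`, and a coefficient vector orthogonal to all of them vanishes.
-/

open Module

namespace MonoidAlgebra

variable {R B M N : Type*} [CommSemiring R] [Semiring B] [Algebra R B] [Monoid M] [Monoid N]

theorem lift_comp_mapDomainAlgHom (f : M →* N) (g : N →* B) :
    (lift R B N g).comp (mapDomainAlgHom R R f) = lift R B M (g.comp f) := by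
  ext; simp

theorem lift_apply_eq_sum [Fintype M] (g : M →* B) (x : R[M]) :
    lift R B M g x = ∑ m, algebraMap R B (x.coeff m) * g m := by
  rw [lift_apply', Finsupp.sum_fintype _ _ (by simp)]

end MonoidAlgebra

section Characters

variable {A R K : Type*} [CommGroup A] [CommRing R] [IsDomain R] [Field K]

theorem MonoidHom.isCyclic_quotient_ker [Finite A] (χ : A →* Rˣ) : IsCyclic (A ⧸ χ.ker) :=
  let e := QuotientGroup.quotientKerEquivRange χ
  have : Finite χ.range := Finite.of_equiv _ e.toEquiv
  isCyclic_of_surjective _ e.symm.surjective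

theorem linearIndependent_units_monoidHom :
    LinearIndependent R (fun (χ : A →* Rˣ) (a : A) => (χ a : R)) :=
  (linearIndependent_monoidHom A R).comp (fun χ => (Units.coeHom R).comp χ)
    fun _ _ h => MonoidHom.ext fun a => Units.ext (DFunLike.congr_fun h a)

theorem eq_zero_of_forall_sum_mul_monoidHom_units_eq_zero [Fintype A]
    [HasEnoughRootsOfUnity K (Monoid.exponent A)] {f : A → K}
    (hf : ∀ χ : A →* Kˣ, ∑ a, f a * χ a = 0) : f = 0 := by
  have := Fintype.ofFinite (A →* Kˣ)
  have hcard : Fintype.card (A →* Kˣ) = finrank K (A → K) := by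
    rw [finrank_fintype_fun_eq_card, ← Nat.card_eq_fintype_card, ← Nat.card_eq_fintype_card,
      CommGroup.card_monoidHom_of_hasEnoughRootsOfUnity]
  let b := basisOfLinearIndependentOfCardEqFinrank' _ linearIndependent_units_monoidHom hcard
  have hdot : dotProductBilin K K f = 0 := b.ext fun χ => by simpa [b, dotProduct] using hf χ
  classical
  funext a
  simpa [dotProduct, Pi.single_apply] using LinearMap.congr_fun hdot (Pi.single a 1)

end Characters

theorem MonoidAlgebra.injective_pi_mapDomainRingHom_cyclic {F A : Type*} [Field F]
    [CommGroup A] [Fintype A] (hA : (Nat.card A : F) ≠ 0) :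
    Function.Injective
      (RingHom.pi (fun B : {B : Subgroup A // IsCyclic (A ⧸ (B : Subgroup A))} =>
        mapDomainRingHom F (QuotientGroup.mk' (B : Subgroup A)))) := by
  let K := AlgebraicClosure F
  have : NeZero (Monoid.exponent A : K) := ⟨fun h => hA <| by
    obtain ⟨k, hk⟩ := Group.exponent_dvd_nat_card (G := A)
    rw [← (algebraMap F K).injective.eq_iff, map_natCast, hk, Nat.cast_mul, h, zero_mul,
      map_zero]⟩
  rw [injective_iff_map_eq_zero]
  intro x hx
  have hχ : ∀ χ : A →* Kˣ, ∑ a, algebraMap F K (x.coeff a) * χ a = 0 := fun χ => by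
    have hker : mapDomainAlgHom F F (QuotientGroup.mk' χ.ker) x = 0 :=
      congrFun hx ⟨χ.ker, χ.isCyclic_quotient_ker⟩
    have hlift : lift F K A ((Units.coeHom K).comp χ) x = 0 := by
      rw [← QuotientGroup.lift_comp_mk' χ.ker χ le_rfl, ← MonoidHom.comp_assoc,
        ← lift_comp_mapDomainAlgHom, AlgHom.comp_apply, hker, map_zero]
    simpa [lift_apply_eq_sum] using hlift
  have hf := eq_zero_of_forall_sum_mul_monoidHom_units_eq_zero hχ
  ext a
  exact (algebraMap F K).injective (by simpa using congrFun hf a)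

/-- For a finite abelian group `A` and a prime `p ∤ |A|`, the natural map
`𝔽_p[A] → ∏_{B ≤ A, A/B cyclic} 𝔽_p[A/B]` is injective. -/
theorem stmt5 (A : Type*) [CommGroup A] [Fintype A] (p : ℕ) (hp : p.Prime)
    (hpA : ¬ p ∣ Nat.card A) :
    Function.Injective
      (Pi.ringHom (fun B : {B : Subgroup A // IsCyclic (A ⧸ (B : Subgroup A))} =>
        MonoidAlgebra.mapDomainRingHom (ZMod p) (QuotientGroup.mk' (B : Subgroup A)))) := by
  have : Fact p.Prime := ⟨hp⟩
  exact MonoidAlgebra.injective_pi_mapDomainRingHom_cyclic <| by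
    rwa [Ne, ZMod.natCast_eq_zero_iff]
end

section
/- Let Â be a finite abelian group and let R(Â) = ℤ[Â] denote its representation ring (equal to the group ring of Â since Â is abelian, identifying characters with group elements). If ξ ∈ R(Â) ⊗ ℤ[1/|Â|] has the property that its restriction to every cyclic subgroup Ĉ ≤ Â lies in p·(R(Ĉ) ⊗ ℤ[1/|Â|]) for a prime p ∤ |Â|, then ξ ∈ p·(R(Â) ⊗ ℤ[1/|Â|]). -/
/-!
Reduce modulo `p` through a ring map `φ : ℤ[1/|A|] → 𝔽̄_p`, whose kernel lies in `p·ℤ[1/|A|]`.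
Every `𝔽̄_p`-algebra map `𝔽̄_p[A] → 𝔽̄_p` is a character of `A`, hence factors through a cyclic
quotient `A ⧸ B`, where the image of `ξ` is divisible by `p` and so vanishes. Since `p ∤ |A|`,
`𝔽̄_p` has enough roots of unity: there are `|A|` characters, linearly independent by Dedekind,
so they span the dual of `𝔽̄_p[A]` and the reduction of `ξ` is zero.
-/

namespace MonoidAlgebra

theorem mem_span_single_one_iff {R M : Type*} [CommSemiring R] [Monoid M] (r : R) (x : R[M]) :
    x ∈ Ideal.span {single 1 r} ↔ ∀ m, r ∣ x.coeff m := by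
  constructor
  · intro hx m
    obtain ⟨y, rfl⟩ := Ideal.mem_span_singleton'.mp hx
    exact ⟨y.coeff m, by rw [coeff_mul_single_one, mul_comm]⟩
  · intro h
    rw [← sum_coeff_single x]
    refine Ideal.sum_mem _ fun m _ => ?_
    obtain ⟨c, hc⟩ := h m
    rw [hc, mul_comm r c, ← mul_one m, ← single_mul_single]
    exact Ideal.mul_mem_left _ _ (Ideal.subset_span rfl)

theorem lift_comp_mapDomainAlgHom_s6 {R S M N : Type*} [CommSemiring R] [Semiring S] [Algebra R S]
    [Monoid M] [Monoid N] (F : N →* S) (f : M →* N) :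
    (lift R S N F).comp (mapDomainAlgHom R R f) = lift R S M (F.comp f) := by
  ext m
  simp

theorem exists_cyclic_quotient_factorization {K G : Type*} [Field K] [CommGroup G] [Finite G]
    (ψ : K[G] →ₐ[K] K) :
    ∃ B : Subgroup G, IsCyclic (G ⧸ B) ∧
      ∃ ψ' : K[G ⧸ B] →ₐ[K] K, ψ = ψ'.comp (mapDomainAlgHom K K (QuotientGroup.mk' B)) := by
  set χ := ((lift K K G).symm ψ).toHomUnits
  refine ⟨χ.ker, ?_, lift K K _ ((Units.coeHom K).comp (QuotientGroup.kerLift χ)), ?_⟩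
  · exact isCyclic_of_injective_ringHom ((Units.coeHom K).comp (QuotientGroup.kerLift χ))
      (Units.val_injective.comp (QuotientGroup.kerLift_injective χ))
  · rw [lift_comp_mapDomainAlgHom_s6]
    apply (lift K K G).symm.injective
    ext g
    simp [χ]

theorem eq_zero_of_forall_algHom_apply_eq_zero {K A : Type*} [Field K] [CommGroup A] [Finite A]
    [HasEnoughRootsOfUnity K (Monoid.exponent A)] {x : K[A]} (hx : ∀ ψ : K[A] →ₐ[K] K, ψ x = 0) :
    x = 0 := by
  have : Fintype A := Fintype.ofFinite A
  have : Module.Finite K K[A] := Module.Finite.equiv (coeffLinearEquiv K).symm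
  have : Fintype (K[A] →ₐ[K] K) := Fintype.ofFinite _
  have hcard : Fintype.card (K[A] →ₐ[K] K) = Module.finrank K (Module.Dual K K[A]) := by
    rw [Subspace.dual_finrank_eq, (coeffLinearEquiv K).finrank_eq, Module.finrank_finsupp_self,
      Fintype.card_eq_nat_card, Nat.card_congr (lift K K A).symm,
      Nat.card_congr MonoidHom.toHomUnitsMulEquiv.toEquiv,
      CommGroup.card_monoidHom_of_hasEnoughRootsOfUnity, Fintype.card_eq_nat_card]
  have hspan :=
    (linearIndependent_algHom_toLinearMap K K[A] K).span_eq_top_of_card_eq_finrank' hcard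
  have hker : Submodule.span K (Set.range (AlgHom.toLinearMap : (K[A] →ₐ[K] K) → _)) ≤
      LinearMap.ker (Module.Dual.eval K K[A] x) := by
    rw [Submodule.span_le]
    rintro _ ⟨ψ, rfl⟩
    exact hx ψ
  exact (Module.forall_dual_apply_eq_zero_iff K x).mp fun f => hker (hspan ▸ Submodule.mem_top)

end MonoidAlgebra

theorem IsLocalization.natCast_dvd_of_ringHom_eq_zero {R K : Type*} [CommRing R] [Algebra ℤ R]
    [CommRing K] (M : Submonoid ℤ) [IsLocalization M R] (p : ℕ) [CharP K p] (φ : R →+* K) {x : R}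
    (hx : φ x = 0) : (p : R) ∣ x := by
  obtain ⟨⟨a, s⟩, h⟩ := IsLocalization.surj M x
  have ha : φ (algebraMap ℤ R a) = 0 := by rw [← h, map_mul, hx, zero_mul]
  rw [eq_intCast, map_intCast] at ha
  obtain ⟨b, rfl⟩ := (CharP.intCast_eq_zero_iff K p a).mp ha
  rw [← (IsLocalization.map_units R s).dvd_mul_right, h]
  exact ⟨b, by simp⟩

open MonoidAlgebra in
/-- Artin-type divisibility: over `Λ = ℤ[1/|A|]`, if `ξ` in the group algebra `Λ[A]` maps into
`p·Λ[C]` for every cyclic quotient `C` of `A` (`p` a prime not dividing `|A|`),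
then `ξ ∈ p·Λ[A]`. -/
theorem stmt6 (A : Type*) [CommGroup A] [Fintype A] (p : ℕ) (hp : p.Prime)
    (hpA : ¬ p ∣ Nat.card A)
    (ξ : MonoidAlgebra (Localization.Away ((Nat.card A : ℤ))) A)
    (hξ : ∀ B : Subgroup A, IsCyclic (A ⧸ B) →
      MonoidAlgebra.mapDomainRingHom (Localization.Away ((Nat.card A : ℤ)))
          (QuotientGroup.mk' B) ξ ∈
        Ideal.span {(p : MonoidAlgebra (Localization.Away ((Nat.card A : ℤ))) (A ⧸ B))}) :
    ξ ∈ Ideal.span {(p : MonoidAlgebra (Localization.Away ((Nat.card A : ℤ))) A)} := by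
  have : Fact p.Prime := ⟨hp⟩
  let K := AlgebraicClosure (ZMod p)
  have hpe : ¬ p ∣ Monoid.exponent A :=
    fun h => hpA (h.trans (Nat.card_eq_fintype_card (α := A) ▸ Group.exponent_dvd_card))
  have : NeZero (Monoid.exponent A : ZMod p) := ⟨mt (ZMod.natCast_eq_zero_iff _ p).mp hpe⟩
  have hunit : IsUnit ((Nat.card A : ℤ) : K) := by
    rwa [isUnit_iff_ne_zero, Ne, CharP.intCast_eq_zero_iff K p, Int.natCast_dvd_natCast]
  let φ := Localization.awayLift (Int.castRingHom K) _ hunit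
  have hφξ : mapRingHom A φ ξ = 0 := by
    refine eq_zero_of_forall_algHom_apply_eq_zero fun ψ => ?_
    obtain ⟨B, hB, ψ', rfl⟩ := exists_cyclic_quotient_factorization ψ
    obtain ⟨y, hy⟩ := Ideal.mem_span_singleton'.mp (hξ B hB)
    have hp0 : (p : K[A ⧸ B]) = 0 := by rw [natCast_def, CharP.cast_eq_zero, single_zero]
    have hcomm := DFunLike.congr_fun (mapRingHom_comp_mapDomainRingHom φ (QuotientGroup.mk' B)) ξ
    rw [RingHom.comp_apply, RingHom.comp_apply, ← hy, map_mul, map_natCast, hp0, mul_zero] at hcomm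
    show ψ' (mapDomainRingHom K (QuotientGroup.mk' B) (mapRingHom A φ ξ)) = 0
    rw [← hcomm, map_zero]
  rw [natCast_def, mem_span_single_one_iff]
  intro a
  refine IsLocalization.natCast_dvd_of_ringHom_eq_zero (Submonoid.powers (Nat.card A : ℤ)) p φ ?_
  rw [← coeff_mapRingHom, hφξ, MonoidAlgebra.coeff_zero, Finsupp.coe_zero, Pi.zero_apply]
end

section
/- Let T' be a finite abelian group, Λ = ℤ[1/|T'|]. For each cyclic quotient σ of T' of order n_σ, let R̃(σ) = Λ[t]/(Φ_{n_σ}(t)). Then the canonical ring homomorphism Λ[T'] → ∏_σ R̃(σ), whose σ-component is induced by the quotient map T' → σ ≅ ℤ/n_σ composed with sending the generator to t, is an isomorphism of rings. -/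
/-!
Each component `Λ[T'] → Λ[t]/(Φₙ)` is surjective, since `t` is the image of an element of `T'`
mapping to a generator of the cyclic quotient. If `x ∉ B`, its image `t ^ k - 1` (with `n ∤ k`)
is a unit: `t ^ d - 1` divides `n` for every proper divisor `d` of `n` (differentiate
`X ^ n - 1 = (X ^ d - 1) Φₙ P` at `t`), and `n` divides `|T'|`, which is invertible in `Λ`.
Hence the kernels of distinct components are comaximal, and the Chinese remainder theorem gives
surjectivity. For injectivity, every complex character `χ` of `T'` factors through the component
indexed by `ker χ`, with `t` sent to a primitive root of unity; so an element killed by every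
component has vanishing Fourier transform, and it vanishes by Fourier inversion since `Λ ⊆ ℂ`.
-/

open Polynomial

section Cyclotomic

variable {S : Type*} [CommRing S] {n : ℕ} {ζ : S}

theorem pow_eq_one_of_isRoot_cyclotomic (hζ : (cyclotomic n S).IsRoot ζ) : ζ ^ n = 1 := by
  simpa [sub_eq_zero] using hζ.dvd (cyclotomic.dvd_X_pow_sub_one n S)

theorem pow_sub_one_dvd_natCast_of_isRoot_cyclotomic (hζ : (cyclotomic n S).IsRoot ζ) {d : ℕ}
    (hd : d ∈ n.properDivisors) : ζ ^ d - 1 ∣ (n : S) := by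
  obtain ⟨P, hP⟩ := X_pow_sub_one_mul_cyclotomic_dvd_X_pow_sub_one_of_dvd S hd
  -- differentiate `X ^ n - 1 = (X ^ d - 1) * Φₙ * P` at the root `ζ` of `Φₙ`
  have key := congrArg (fun p => (derivative p).eval ζ) hP
  simp only [derivative_mul, derivative_sub, derivative_X_pow, derivative_one, eval_add, eval_mul,
    eval_sub, hζ.eq_zero, eval_C, eval_pow, eval_X, eval_one, sub_zero, zero_mul, mul_zero,
    add_zero, zero_add] at key
  have hn : (n : S) = ζ * (n * ζ ^ (n - 1)) := by
    rw [mul_left_comm, ← pow_succ',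
      Nat.sub_add_cancel (Nat.one_le_of_lt (Nat.mem_properDivisors.1 hd).2),
      pow_eq_one_of_isRoot_cyclotomic hζ, mul_one]
  rw [hn, key]
  exact ⟨ζ * (derivative (cyclotomic n S)).eval ζ * P.eval ζ, by ring⟩

theorem isUnit_pow_sub_one_of_isRoot_cyclotomic (hζ : (cyclotomic n S).IsRoot ζ)
    (hn : IsUnit (n : S)) {m : ℕ} (hm : ¬ n ∣ m) : IsUnit (ζ ^ m - 1) := by
  nontriviality S
  have hn0 : n ≠ 0 := by rintro rfl; simp at hn
  have hgcd : Nat.gcd m n < n :=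
    (Nat.gcd_le_right _ (Nat.pos_of_ne_zero hn0)).lt_of_ne
      fun h => hm (h ▸ Nat.gcd_dvd_left m n)
  -- `ζ ^ gcd m n` is a power of `ζ ^ m`
  obtain ⟨k, -, hk⟩ := Nat.exists_mul_mod_eq_gcd hgcd
  have hdvd : ζ ^ m - 1 ∣ ζ ^ Nat.gcd m n - 1 := by
    rw [← hk, ← pow_eq_pow_mod _ (pow_eq_one_of_isRoot_cyclotomic hζ), pow_mul]
    exact sub_one_dvd_pow_sub_one _ _
  exact isUnit_of_dvd_unit (hdvd.trans <| pow_sub_one_dvd_natCast_of_isRoot_cyclotomic hζ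
    (Nat.mem_properDivisors.2 ⟨Nat.gcd_dvd_right m n, hgcd⟩)) hn

end Cyclotomic

theorem AdjoinRoot.isRoot_cyclotomic_root (R : Type*) [CommRing R] (n : ℕ) :
    (cyclotomic n (AdjoinRoot (cyclotomic n R))).IsRoot (root (cyclotomic n R)) := by
  simpa only [map_cyclotomic] using isRoot_root (cyclotomic n R)

section Ideals

variable {A : Type*} [CommRing A]

theorem isCoprime_ker_of_isUnit {R S F₁ F₂ : Type*} [Ring R] [Ring S] [FunLike F₁ A R]
    [RingHomClass F₁ A R] [FunLike F₂ A S] [RingHomClass F₂ A S] (f : F₁) (g : F₂)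
    (hg : Function.Surjective g) {a : A} (hfa : f a = 0) (hga : IsUnit (g a)) :
    IsCoprime (RingHom.ker f) (RingHom.ker g) := by
  obtain ⟨w, hw⟩ := hg ↑hga.unit⁻¹
  refine Ideal.isCoprime_iff_exists.2 ⟨a * w, ?_, 1 - a * w, ?_, add_sub_cancel _ _⟩
  · rw [RingHom.mem_ker, map_mul, hfa, zero_mul]
  · rw [RingHom.mem_ker, map_sub, map_one, map_mul, hw, hga.mul_val_inv, sub_self]

theorem RingHom.pi_surjective_of_pairwise_isCoprime_ker {ι : Type*} [_root_.Finite ι]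
    {R : ι → Type*} [∀ i, Ring (R i)] (f : ∀ i, A →+* R i) (hf : ∀ i, Function.Surjective (f i))
    (hcop : Pairwise fun i j => IsCoprime (RingHom.ker (f i)) (RingHom.ker (f j))) :
    Function.Surjective (RingHom.pi f) := by
  intro y
  choose x hx using fun i => hf i (y i)
  obtain ⟨r, hr⟩ := Ideal.exists_forall_sub_mem_ideal hcop x
  refine ⟨r, funext fun i => ?_⟩
  rw [RingHom.pi_apply, ← hx i]
  exact (RingHom.sub_mem_ker_iff _).1 (hr i)

end Ideals

section Characters

theorem MonoidHom.surjective_of_card_quotient_ker_eq {G H : Type*} [Group G] [Group H] [Finite H]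
    (φ : G →* H) (h : Nat.card (G ⧸ φ.ker) = Nat.card H) : Function.Surjective φ := by
  rw [← MonoidHom.range_eq_top]
  exact Subgroup.eq_top_of_card_eq _ (Subgroup.index_ker φ ▸ h)

variable {G : Type*} [CommGroup G] {n : ℕ} {φ : G →* Multiplicative (ZMod n)} {x₁ : G}

theorem MonoidHom.apply_eq_pow_val_of_ker_le {M : Type*} [Group M] [NeZero n] (χ : G →* M)
    (hker : φ.ker ≤ χ.ker) (hx₁ : φ x₁ = Multiplicative.ofAdd 1) (x : G) :
    χ x = χ x₁ ^ (Multiplicative.toAdd (φ x)).val := by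
  rw [← map_pow, χ.eq_iff]
  apply hker
  rw [← φ.eq_iff, map_pow, hx₁, ← ofAdd_nsmul, nsmul_one, ZMod.natCast_zmod_val, ofAdd_toAdd]

theorem MonoidHom.isPrimitiveRoot_of_ker_eq {M : Type*} [CommGroup M] (χ : G →* M)
    (hker : χ.ker = φ.ker) (hx₁ : φ x₁ = Multiplicative.ofAdd 1) : IsPrimitiveRoot (χ x₁) n := by
  have key : ∀ l : ℕ, χ x₁ ^ l = 1 ↔ n ∣ l := fun l => by
    rw [← map_pow, ← χ.mem_ker, hker, φ.mem_ker, map_pow, hx₁, ← ofAdd_nsmul, nsmul_one,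
      ofAdd_eq_one, ZMod.natCast_eq_zero_iff]
  exact ⟨(key n).2 dvd_rfl, fun l => (key l).1⟩

end Characters

section Fourier

variable {G : Type*} [CommGroup G] {K : Type*} [Field K]

theorem sum_monoidHom_units_apply_eq_zero [Finite G]
    [HasEnoughRootsOfUnity K (Monoid.exponent G)] [Fintype (G →* Kˣ)] {z : G} (hz : z ≠ 1) :
    ∑ χ : G →* Kˣ, (χ z : K) = 0 := by
  obtain ⟨χ₀, hχ₀⟩ := CommGroup.exists_apply_ne_one_of_hasEnoughRootsOfUnity G K hz
  have hshift : (χ₀ z : K) * ∑ χ : G →* Kˣ, (χ z : K) = ∑ χ : G →* Kˣ, (χ z : K) := by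
    rw [Finset.mul_sum]
    exact Fintype.sum_equiv (Equiv.mulLeft χ₀) _ _ fun χ => by simp
  have hne : (χ₀ z : K) - 1 ≠ 0 := sub_ne_zero.2 fun h => hχ₀ (Units.ext h)
  exact (mul_eq_zero.1 (by rw [sub_mul, hshift, one_mul, sub_self])).resolve_left hne

theorem eq_zero_of_forall_sum_mul_monoidHom_eq_zero [Fintype G] [CharZero K]
    [HasEnoughRootsOfUnity K (Monoid.exponent G)] (η : G → K)
    (h : ∀ χ : G →* Kˣ, ∑ x, η x * χ x = 0) : η = 0 := by
  have : Fintype (G →* Kˣ) := Fintype.ofFinite _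
  funext y
  -- Fourier inversion: `∑_χ χ(y⁻¹) ∑_x η(x) χ(x) = |Ĝ| η(y)`
  have hinv : ∑ χ : G →* Kˣ, (χ y⁻¹ : K) * ∑ x, η x * χ x =
      Fintype.card (G →* Kˣ) * η y := by
    simp_rw [Finset.mul_sum]
    rw [Finset.sum_comm, Fintype.sum_eq_single y]
    · simp [mul_comm]
    · intro x hxy
      have hx : x * y⁻¹ ≠ 1 := mul_inv_eq_one.not.2 hxy
      calc ∑ χ : G →* Kˣ, (χ y⁻¹ : K) * (η x * χ x)
          = η x * ∑ χ : G →* Kˣ, (χ (x * y⁻¹) : K) := by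
            rw [Finset.mul_sum]
            refine Finset.sum_congr rfl fun χ _ => ?_
            rw [map_mul, Units.val_mul]
            ring
        _ = 0 := by rw [sum_monoidHom_units_apply_eq_zero hx, mul_zero]
  simp only [h, mul_zero, Finset.sum_const_zero] at hinv
  exact (mul_eq_zero.1 hinv.symm).resolve_left (Nat.cast_ne_zero.2 Fintype.card_ne_zero)

theorem MonoidAlgebra.eq_zero_of_forall_sum_mul_eq_zero {R : Type*} [CommRing R] [Fintype G]
    [CharZero K] [HasEnoughRootsOfUnity K (Monoid.exponent G)] (ψ : R →+* K)
    (hψ : Function.Injective ψ) (ξ : MonoidAlgebra R G)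
    (h : ∀ χ : G →* Kˣ, ∑ x, ψ (ξ.coeff x) * χ x = 0) : ξ = 0 := by
  ext x
  exact hψ <| (congrFun (eq_zero_of_forall_sum_mul_monoidHom_eq_zero _ h) x).trans
    (map_zero ψ).symm

end Fourier

section CyclotomicQuotient

open MonoidAlgebra

variable {R : Type*} [CommRing R] {G : Type*} [CommGroup G] {n : ℕ}

def SendsToRootPow (φ : G →* Multiplicative (ZMod n))
    (F : MonoidAlgebra R G →ₐ[R] AdjoinRoot (cyclotomic n R)) : Prop :=
  ∀ x, F (single x 1) = AdjoinRoot.root (cyclotomic n R) ^ (Multiplicative.toAdd (φ x)).val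

namespace SendsToRootPow

variable {φ : G →* Multiplicative (ZMod n)}
  {F : MonoidAlgebra R G →ₐ[R] AdjoinRoot (cyclotomic n R)}

theorem apply_single_one_of_mem_ker (hF : SendsToRootPow φ F) {x : G} (hx : x ∈ φ.ker) :
    F (single x 1) = 1 := by
  rw [hF, φ.mem_ker.1 hx, toAdd_one, ZMod.val_zero, pow_zero]

theorem isUnit_apply_single_one_sub_one [NeZero n] (hF : SendsToRootPow φ F)
    (hn : IsUnit (n : R)) {x : G} (hx : x ∉ φ.ker) : IsUnit (F (single x 1) - 1) := by
  rw [hF]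
  refine isUnit_pow_sub_one_of_isRoot_cyclotomic (AdjoinRoot.isRoot_cyclotomic_root R n)
    (by simpa using hn.map (algebraMap R (AdjoinRoot (cyclotomic n R)))) ?_
  rwa [← ZMod.natCast_eq_zero_iff, ZMod.natCast_zmod_val, ← ofAdd_eq_one, ofAdd_toAdd,
    ← φ.mem_ker]

theorem surjective (hF : SendsToRootPow φ F) (hφ : Function.Surjective φ) :
    Function.Surjective F := by
  rw [← AlgHom.range_eq_top, eq_top_iff, ← AdjoinRoot.adjoinRoot_eq_top, Algebra.adjoin_le_iff,
    Set.singleton_subset_iff]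
  obtain ⟨x₁, hx₁⟩ := hφ (Multiplicative.ofAdd 1)
  refine ⟨single x₁ 1, (hF x₁).trans ?_⟩
  rw [hx₁, toAdd_ofAdd, ZMod.val_one_eq_one_mod,
    ← pow_eq_pow_mod _ (pow_eq_one_of_isRoot_cyclotomic (AdjoinRoot.isRoot_cyclotomic_root R n)),
    pow_one]

theorem isCoprime_ker {n' : ℕ} [NeZero n'] {φ' : G →* Multiplicative (ZMod n')}
    {F' : MonoidAlgebra R G →ₐ[R] AdjoinRoot (cyclotomic n' R)} (hF : SendsToRootPow φ F)
    (hF' : SendsToRootPow φ' F') (hF'surj : Function.Surjective F') (hn' : IsUnit (n' : R))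
    (hle : ¬ φ.ker ≤ φ'.ker) : IsCoprime (RingHom.ker F) (RingHom.ker F') := by
  obtain ⟨x, hx, hx'⟩ := SetLike.not_le_iff_exists.1 hle
  refine isCoprime_ker_of_isUnit F F' hF'surj (a := single x 1 - 1) ?_ ?_
  · rw [map_sub, map_one, hF.apply_single_one_of_mem_ker hx, sub_self]
  · rw [map_sub, map_one]
    exact hF'.isUnit_apply_single_one_sub_one hn' hx'

theorem exists_ringHom_apply_eq_sum [Fintype G] [NeZero n] {K : Type*} [Field K]
    (hF : SendsToRootPow φ F) (hφ : Function.Surjective φ) (ψ : R →+* K) (χ : G →* Kˣ)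
    (hker : χ.ker = φ.ker) :
    ∃ ι : AdjoinRoot (cyclotomic n R) →+* K, ∀ ξ, ι (F ξ) = ∑ x, ψ (ξ.coeff x) * χ x := by
  obtain ⟨x₁, hx₁⟩ := hφ (Multiplicative.ofAdd 1)
  have hprim : IsPrimitiveRoot (χ x₁ : K) n :=
    IsPrimitiveRoot.coe_units_iff.2 (MonoidHom.isPrimitiveRoot_of_ker_eq χ hker hx₁)
  refine ⟨AdjoinRoot.lift ψ (χ x₁ : K) ?_, fun ξ => ?_⟩
  · rw [eval₂_eq_eval_map, map_cyclotomic]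
    exact hprim.isRoot_cyclotomic (NeZero.pos n)
  induction ξ using MonoidAlgebra.induction_linear with
  | zero => simp
  | add ξ₁ ξ₂ h₁ h₂ => simp [h₁, h₂, Finset.sum_add_distrib, add_mul]
  | single x r =>
    rw [Fintype.sum_eq_single x fun y hy => by simp [Ne.symm hy]]
    rw [← mul_one r, ← smul_eq_mul, ← smul_single, map_smul, Algebra.smul_def, hF x, map_mul,
      AdjoinRoot.algebraMap_eq, AdjoinRoot.lift_of, map_pow, AdjoinRoot.lift_root,
      ← Units.val_pow_eq_pow_val, ← MonoidHom.apply_eq_pow_val_of_ker_le χ hker.ge hx₁]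
    simp

theorem isCoprime_ker_of_ker_ne {n' : ℕ} [NeZero n] [NeZero n']
    {φ' : G →* Multiplicative (ZMod n')}
    {F' : MonoidAlgebra R G →ₐ[R] AdjoinRoot (cyclotomic n' R)} (hF : SendsToRootPow φ F)
    (hF' : SendsToRootPow φ' F') (hFsurj : Function.Surjective F)
    (hF'surj : Function.Surjective F') (hn : IsUnit (n : R)) (hn' : IsUnit (n' : R))
    (hne : φ.ker ≠ φ'.ker) : IsCoprime (RingHom.ker F) (RingHom.ker F') := by
  by_cases hle : φ.ker ≤ φ'.ker
  · exact (hF'.isCoprime_ker hF hFsurj hn fun hle' => hne (le_antisymm hle hle')).symm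
  · exact hF.isCoprime_ker hF' hF'surj hn' hle

end SendsToRootPow

end CyclotomicQuotient

theorem Localization.Away.exists_injective_ringHom_of_int {N : ℤ} (hN : N ≠ 0) (K : Type*)
    [Field K] [CharZero K] : ∃ ψ : Localization.Away N →+* K, Function.Injective ψ := by
  have hNK : IsUnit ((Int.castRingHom K) N) := by simpa using hN
  refine ⟨IsLocalization.Away.lift N hNK, (IsLocalization.lift_injective_iff _).2 fun x y => ?_⟩
  rw [(IsLocalization.injective (Localization.Away N)
    (powers_le_nonZeroDivisors_of_noZeroDivisors hN)).eq_iff,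
    (Int.castRingHom K).injective_int.eq_iff]

theorem Localization.Away.isUnit_natCast_of_dvd {N d : ℕ} (hd : d ∣ N) :
    IsUnit (d : Localization.Away (N : ℤ)) := by
  have hN := IsLocalization.Away.algebraMap_isUnit (S := Localization.Away (N : ℤ)) (N : ℤ)
  rw [map_natCast] at hN
  exact isUnit_of_dvd_unit (Nat.cast_dvd_cast hd) hN

theorem MonoidHom.isCyclic_quotient_ker_s7 {G K : Type*} [Group G] [Finite G] [CommRing K]
    [IsDomain K] (χ : G →* Kˣ) : IsCyclic (G ⧸ χ.ker) :=
  have : Finite χ.range := Finite.of_surjective _ χ.rangeRestrict_surjective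
  isCyclic_of_surjective (QuotientGroup.quotientKerEquivRange χ).symm (MulEquiv.surjective _)

theorem stmt7_general (T' : Type*) [CommGroup T'] [Fintype T']
    (g : ∀ B : {B : Subgroup T' // IsCyclic (T' ⧸ (B : Subgroup T'))},
      T' →* Multiplicative (ZMod (Nat.card (T' ⧸ (B : Subgroup T')))))
    (hg2 : ∀ B, (g B).ker = (B : Subgroup T'))
    (f : ∀ B : {B : Subgroup T' // IsCyclic (T' ⧸ (B : Subgroup T'))},
      MonoidAlgebra (Localization.Away ((Nat.card T' : ℤ))) T'
        →ₐ[Localization.Away ((Nat.card T' : ℤ))]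
      AdjoinRoot (Polynomial.cyclotomic (Nat.card (T' ⧸ (B : Subgroup T')))
        (Localization.Away ((Nat.card T' : ℤ)))))
    (hf : ∀ B x, f B (MonoidAlgebra.single x 1) =
      (AdjoinRoot.root (Polynomial.cyclotomic (Nat.card (T' ⧸ (B : Subgroup T')))
        (Localization.Away ((Nat.card T' : ℤ))))) ^ (Multiplicative.toAdd (g B x)).val) :
    Function.Bijective
      (fun ξ : MonoidAlgebra (Localization.Away ((Nat.card T' : ℤ))) T' =>
        fun B => f B ξ) := by
  have : ∀ B : {B : Subgroup T' // IsCyclic (T' ⧸ (B : Subgroup T'))},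
      NeZero (Nat.card (T' ⧸ (B : Subgroup T'))) := fun B => ⟨Nat.card_pos.ne'⟩
  have hgsurj : ∀ B, Function.Surjective (g B) := fun B =>
    (g B).surjective_of_card_quotient_ker_eq <| by
      rw [hg2, Nat.card_congr Multiplicative.toAdd, Nat.card_zmod]
  have hunit : ∀ B : {B : Subgroup T' // IsCyclic (T' ⧸ (B : Subgroup T'))},
      IsUnit (Nat.card (T' ⧸ (B : Subgroup T')) : Localization.Away ((Nat.card T' : ℤ))) :=
    fun B => Localization.Away.isUnit_natCast_of_dvd (Subgroup.card_quotient_dvd_card _)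
  have hsurj : ∀ B, Function.Surjective (f B).toRingHom := fun B =>
    SendsToRootPow.surjective (hf B) (hgsurj B)
  show Function.Bijective (RingHom.pi fun B => (f B).toRingHom)
  refine ⟨(injective_iff_map_eq_zero _).2 fun ξ hξ => ?_,
    RingHom.pi_surjective_of_pairwise_isCoprime_ker
      (A := MonoidAlgebra (Localization.Away ((Nat.card T' : ℤ))) T') _ hsurj fun B B₀ hne =>
      SendsToRootPow.isCoprime_ker_of_ker_ne (hf B) (hf B₀) (hsurj B) (hsurj B₀) (hunit B)
        (hunit B₀) (by rwa [hg2, hg2, Ne, ← Subtype.ext_iff])⟩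
  obtain ⟨ψ, hψ⟩ := Localization.Away.exists_injective_ringHom_of_int
    (Nat.cast_ne_zero.2 Nat.card_pos.ne' : (Nat.card T' : ℤ) ≠ 0) ℂ
  have : NeZero (Monoid.exponent T' : ℂ) :=
    ⟨Nat.cast_ne_zero.2 Monoid.exponent_ne_zero_of_finite⟩
  refine MonoidAlgebra.eq_zero_of_forall_sum_mul_eq_zero ψ hψ ξ fun χ => ?_
  let B : {B : Subgroup T' // IsCyclic (T' ⧸ (B : Subgroup T'))} :=
    ⟨χ.ker, χ.isCyclic_quotient_ker_s7⟩
  obtain ⟨ι, hι⟩ := SendsToRootPow.exists_ringHom_apply_eq_sum (hf B) (hgsurj B) ψ χ (hg2 B).symm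
  rw [← hι, show f B ξ = 0 from congrFun hξ B, map_zero]

/-- For a finite abelian group `T'` and `Λ = ℤ[1/|T'|]`, the canonical ring homomorphism
`Λ[T'] → ∏_σ Λ[t]/(Φ_{n_σ})`, the product being over all cyclic quotients `σ = T'/B` of `T'`,
whose `σ`-component is induced by the quotient map `T' → σ ≅ ℤ/n_σ` followed by sending the
generator to `t`, is a ring isomorphism.  The components are encoded as `Λ`-algebra maps
`f B` characterized by `f B (single x 1) = t ^ (g B x)`, where `g B : T' → ℤ/n_B` is a
surjection with kernel `B`. -/
theorem stmt7 (T' : Type*) [CommGroup T'] [Fintype T']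
    (g : ∀ B : {B : Subgroup T' // IsCyclic (T' ⧸ (B : Subgroup T'))},
      T' →* Multiplicative (ZMod (Nat.card (T' ⧸ (B : Subgroup T')))))
    (hg1 : ∀ B, Function.Surjective (g B))
    (hg2 : ∀ B, (g B).ker = (B : Subgroup T'))
    (f : ∀ B : {B : Subgroup T' // IsCyclic (T' ⧸ (B : Subgroup T'))},
      MonoidAlgebra (Localization.Away ((Nat.card T' : ℤ))) T'
        →ₐ[Localization.Away ((Nat.card T' : ℤ))]
      AdjoinRoot (Polynomial.cyclotomic (Nat.card (T' ⧸ (B : Subgroup T')))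
        (Localization.Away ((Nat.card T' : ℤ)))))
    (hf : ∀ B x, f B (MonoidAlgebra.single x 1) =
      (AdjoinRoot.root (Polynomial.cyclotomic (Nat.card (T' ⧸ (B : Subgroup T')))
        (Localization.Away ((Nat.card T' : ℤ))))) ^ (Multiplicative.toAdd (g B x)).val) :
    Function.Bijective
      (fun ξ : MonoidAlgebra (Localization.Away ((Nat.card T' : ℤ))) T' =>
        fun B => f B ξ) :=
  stmt7_general T' g hg2 f hf
end

section
/- Let n ≥ 1 and s ≥ 1, and let σ = μ_s be central in GL_n acting by scalars. The ring homomorphism π: R(GL_n) → R(μ_s) = ℤ[t]/(t^s−1) sending the r-th exterior power Λ^r E of the standard representation E to C(n,r)·t^r becomes surjective after tensoring with Λ = ℤ[1/s]. Equivalently, for every prime p ∤ s, the induced map R(GL_n) ⊗ 𝔽_p → 𝔽_p[t]/(t^s−1) is surjective. -/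
lemma lucas_aux (p : ℕ) [Fact p.Prime] (k m : ℕ) :
    Nat.choose (p ^ k * m) (p ^ k) ≡ m [MOD p] := by
  induction k with
  | zero => simpa using Nat.ModEq.refl m
  | succ k ih =>
    have hp := (Fact.out : p.Prime).pos
    have h := Choose.choose_modEq_choose_mod_mul_choose_div_nat
      (p := p) (n := p ^ (k+1) * m) (k := p ^ (k+1))
    have h1 : (p ^ (k+1) * m) % p = 0 := by
      rw [pow_succ', mul_assoc]; exact Nat.mul_mod_right p _
    have h2 : (p ^ (k+1)) % p = 0 := by
      rw [pow_succ']; exact Nat.mul_mod_right p _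
    have h3 : (p ^ (k+1) * m) / p = p ^ k * m := by
      rw [pow_succ', mul_assoc, Nat.mul_div_cancel_left _ hp]
    have h4 : (p ^ (k+1)) / p = p ^ k := by
      rw [pow_succ', Nat.mul_div_cancel_left _ hp]
    rw [h1, h2, h3, h4, Nat.choose_self, one_mul] at h
    exact h.trans ih

/-- For a prime `p ∤ s`, the image of `R(GL_n) ⊗ 𝔽_p → 𝔽_p[t]/(t^s − 1)` is everything:
the `𝔽_p`-subalgebra of `𝔽_p[t]/(t^s − 1)` generated by the restrictions
`Λ^r E ↦ C(n,r)·t^r` (`1 ≤ r ≤ n`) of the exterior powers of the standard representation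
of `GL_n` to the central `μ_s` is the whole ring; i.e. the induced map is surjective. -/
theorem stmt16 (p s n : ℕ) (hp : p.Prime) (hs : 0 < s) (hps : ¬ p ∣ s) (hn : 0 < n) :
    Algebra.adjoin (ZMod p)
      {x : AdjoinRoot ((Polynomial.X : Polynomial (ZMod p)) ^ s - 1) |
        ∃ r : ℕ, 1 ≤ r ∧ r ≤ n ∧
          x = (Nat.choose n r : AdjoinRoot ((Polynomial.X : Polynomial (ZMod p)) ^ s - 1)) *
            (AdjoinRoot.root ((Polynomial.X : Polynomial (ZMod p)) ^ s - 1)) ^ r} = ⊤ := by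
  haveI : Fact p.Prime := ⟨hp⟩
  set f : Polynomial (ZMod p) := Polynomial.X ^ s - 1 with hf
  set t : AdjoinRoot f := AdjoinRoot.root f with ht
  have hts : t ^ s = 1 := by
    have h0 : AdjoinRoot.mk f f = 0 := AdjoinRoot.mk_self
    rw [hf, map_sub, map_pow, map_one, AdjoinRoot.mk_X, sub_eq_zero] at h0
    exact h0
  -- choose q = p-part of n
  obtain ⟨q, hq1, hqle, hchoose_ne, hcop⟩ :
      ∃ q : ℕ, 1 ≤ q ∧ q ≤ n ∧ ((n.choose q : ZMod p) ≠ 0) ∧ Nat.Coprime q s := by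
    refine ⟨p ^ (n.factorization p), Nat.one_le_pow _ _ hp.pos,
      Nat.le_of_dvd hn (Nat.ordProj_dvd n p), ?_, Nat.Coprime.pow_left _
        (hp.coprime_iff_not_dvd.mpr hps)⟩
    have hpm : ¬ p ∣ n / p ^ (n.factorization p) := Nat.not_dvd_ordCompl hp hn.ne'
    have hnm : p ^ (n.factorization p) * (n / p ^ (n.factorization p)) = n :=
      Nat.mul_div_cancel' (Nat.ordProj_dvd n p)
    have hcong := lucas_aux p (n.factorization p) (n / p ^ (n.factorization p))
    rw [hnm] at hcong
    intro h0
    rw [ZMod.natCast_eq_zero_iff] at h0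
    exact hpm (Nat.modEq_zero_iff_dvd.mp (hcong.symm.trans (Nat.modEq_zero_iff_dvd.mpr h0)))
  set T := Algebra.adjoin (ZMod p)
      {x : AdjoinRoot f | ∃ r : ℕ, 1 ≤ r ∧ r ≤ n ∧ x = (Nat.choose n r : AdjoinRoot f) * t ^ r}
    with hT
  have hx : (Nat.choose n q : AdjoinRoot f) * t ^ q ∈ T :=
    Algebra.subset_adjoin ⟨q, hq1, hqle, rfl⟩
  have htq : t ^ q ∈ T := by
    have h1 : (algebraMap (ZMod p) (AdjoinRoot f)) ((n.choose q : ZMod p)⁻¹) *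
        ((Nat.choose n q : AdjoinRoot f) * t ^ q) ∈ T :=
      T.mul_mem (T.algebraMap_mem _) hx
    have h2 : (Nat.choose n q : AdjoinRoot f) =
        algebraMap (ZMod p) (AdjoinRoot f) (Nat.choose n q : ZMod p) := by
      simp
    rwa [h2, ← mul_assoc, ← map_mul, inv_mul_cancel₀ hchoose_ne, map_one, one_mul] at h1
  have htT : t ∈ T := by
    rcases Nat.lt_or_ge 1 s with h1 | h1
    · obtain ⟨a, -, ha⟩ := Nat.exists_mul_mod_eq_one_of_coprime hcop h1
      have hdecomp : q * a = s * (q * a / s) + 1 := by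
        conv_lhs => rw [← Nat.div_add_mod (q * a) s, ha]
      have hpow : t ^ (q * a) = t := by
        rw [hdecomp, pow_succ, pow_mul, hts, one_pow, one_mul]
      rw [← hpow, pow_mul]
      exact T.pow_mem htq a
    · have hs1 : s = 1 := by omega
      subst hs1
      rw [pow_one] at hts
      rw [hts]
      exact T.one_mem
  rw [eq_top_iff, ← AdjoinRoot.adjoinRoot_eq_top (f := f)]
  exact Algebra.adjoin_le (Set.singleton_subset_iff.mpr htT)
end
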